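/- For all ε ∈ (0,1], λ > 0, η ∈ ℝ, k ∈ ℝ, the determinant δ̃_ε(λ,η,k) of the matrix D̃_ε(λ,η,k) equals ε⁸λ⁴ + 8ε⁶λ³γR_ε + 4ε⁴λ²·[5(γR_ε)² + ω̄² + (Δω/2)² − (γεR′(k)η/2)²] + 4ε²λγR_ε·[4(γR_ε)² + 4ω̄² + Δω² − (γεR′(k)η)²] + 4·[(γR_ε·Δω)² − 2ε·γ²R_ε·Δω·ω̄·R′(k)·η + (ω̄·Δω)²] + 16·(γR_ε·ω̄)². -/

import Mathlib

noncomputable section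

open Real Matrix Complex

/-- Dispersion relation `ω(k) = 2√α·sin²(πk)`. -/
def ω (α k : ℝ) : ℝ := 2 * Real.sqrt α * Real.sin (π * k) ^ 2

/-- `R(k) = 2·sin²(πk)·(1 + 2cos²(πk))`. -/
def R (k : ℝ) : ℝ := 2 * Real.sin (π * k) ^ 2 * (1 + 2 * Real.cos (π * k) ^ 2)

/-- `R′(k) = 2π·(sin(2πk) + sin(4πk))`. -/
def R' (k : ℝ) : ℝ := 2 * π * (Real.sin (2 * π * k) + Real.sin (4 * π * k))

/-- `R″(k) = 4π²·(4cos²(2πk) + cos(2πk) − 2)`. -/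
def R'' (k : ℝ) : ℝ := 4 * π ^ 2 * (4 * Real.cos (2 * π * k) ^ 2 + Real.cos (2 * π * k) - 2)

/-- `R_ε = R(k) + ((εη)²/8)·R″(k)`. -/
def Rε (ε η k : ℝ) : ℝ := R k + (ε * η) ^ 2 / 8 * R'' k

/-- `ω̄ = (ω(k + εη/2) + ω(k − εη/2))/2`. -/
def ωbar (α ε η k : ℝ) : ℝ := (ω α (k + ε * η / 2) + ω α (k - ε * η / 2)) / 2

/-- `Δω = ω(k + εη/2) − ω(k − εη/2)`. -/
def Δω (α ε η k : ℝ) : ℝ := ω α (k + ε * η / 2) - ω α (k - ε * η / 2)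

/-- `D̃₁ = ε²λ + 2γR_ε + i·Δω`. -/
def D₁ (α γ ε lam η k : ℝ) : ℂ :=
  (ε ^ 2 * lam + 2 * γ * Rε ε η k : ℝ) + Complex.I * (Δω α ε η k : ℝ)

/-- `D̃₂ = ε²λ + 2γR_ε + 2i·ω̄`. -/
def D₂ (α γ ε lam η k : ℝ) : ℂ :=
  (ε ^ 2 * lam + 2 * γ * Rε ε η k : ℝ) + 2 * Complex.I * (ωbar α ε η k : ℝ)

/-- `D̃₊ = −γR_ε + (γε/2)·R′(k)·η`. -/
def Dplus (γ ε η k : ℝ) : ℝ := -γ * Rε ε η k + γ * ε / 2 * R' k * η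

/-- `D̃₋ = −γR_ε − (γε/2)·R′(k)·η`. -/
def Dminus (γ ε η k : ℝ) : ℝ := -γ * Rε ε η k - γ * ε / 2 * R' k * η

/-- The 4×4 matrix `D̃_ε(λ,η,k)`. -/
def Dmat (α γ ε lam η k : ℝ) : Matrix (Fin 4) (Fin 4) ℂ :=
  !![D₁ α γ ε lam η k, (Dplus γ ε η k : ℂ), (Dminus γ ε η k : ℂ), 0;
     (Dplus γ ε η k : ℂ), D₂ α γ ε lam η k, 0, (Dminus γ ε η k : ℂ);
     (Dminus γ ε η k : ℂ), 0, (starRingEnd ℂ) (D₂ α γ ε lam η k), (Dplus γ ε η k : ℂ);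
     0, (Dminus γ ε η k : ℂ), (Dplus γ ε η k : ℂ), (starRingEnd ℂ) (D₁ α γ ε lam η k)]

/-- `δ̃_ε(λ,η,k) = det D̃_ε(λ,η,k)`. -/
def δdet (α γ ε lam η k : ℝ) : ℂ := (Dmat α γ ε lam η k).det

/-!
In 2×2 blocks, `D̃_ε = [[A, D̃₋·I], [D̃₋·I, B]]` with `A = [[D̃₁, D̃₊], [D̃₊, D̃₂]]` and
`B = [[D̃₂*, D̃₊], [D̃₊, D̃₁*]]`; since the off-diagonal blocks are scalar,
`det D̃_ε = det (A B − D̃₋² I)`. The diagonal entries of `A B − D̃₋² I` are complex conjugates of each other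
and its off-diagonal entries are `D̃₊ · 2 Re D̃₁` and `D̃₊ · 2 Re D̃₂`, so
`δ̃_ε = |D̃₁ D̃₂* + D̃₊² − D̃₋²|² − 4 D̃₊² Re D̃₁ Re D̃₂`, which expands to the stated polynomial.
-/

open ComplexConjugate

theorem det_fin_four_of_scalar_offDiag_blocks {R : Type*} [CommRing R] (a b c d p m : R) :
    !![a, p, m, 0; p, b, 0, m; m, 0, c, p; 0, m, p, d].det
      = (a * c + p ^ 2 - m ^ 2) * (b * d + p ^ 2 - m ^ 2) - p ^ 2 * (a + d) * (b + c) := by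
  rw [Matrix.det_succ_row_zero, Fin.sum_univ_four]
  simp only [Nat.succ_eq_add_one, Nat.reduceAdd, Fin.isValue, Fin.coe_ofNat_eq_mod, Nat.zero_mod, pow_zero,
    of_apply, cons_val', cons_val_zero, cons_val_fin_one, one_mul, Fin.succAbove_zero, det_fin_three, submatrix_apply,
    Fin.succ_zero_eq_one, cons_val_one, Fin.succ_one_eq_two, cons_val, Fin.reduceSucc, mul_zero, zero_mul, sub_zero,
    add_zero, Nat.one_mod, pow_one, neg_mul, Fin.succAbove, Fin.castSucc_zero, zero_lt_one, ↓reduceIte,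
    Fin.castSucc_one, lt_self_iff_false, Fin.reduceCastSucc, Fin.lt_one_iff, Fin.reduceEq, Nat.reduceMod, even_two,
    Even.neg_pow, one_pow, Fin.reduceLT, zero_sub, Nat.mod_succ]
  ring

theorem det_fin_four_of_conj_diag (z w : ℂ) (p m : ℝ) :
    !![z, (p : ℂ), (m : ℂ), 0; (p : ℂ), w, 0, (m : ℂ);
        (m : ℂ), 0, conj w, (p : ℂ); 0, (m : ℂ), (p : ℂ), conj z].det
      = ((normSq (z * conj w + (p ^ 2 - m ^ 2 : ℝ)) - 4 * p ^ 2 * z.re * w.re : ℝ) : ℂ) := by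
  set u := z * conj w + ((p ^ 2 - m ^ 2 : ℝ) : ℂ)
  have hconj : w * conj z + ((p ^ 2 - m ^ 2 : ℝ) : ℂ) = conj u := by
    simp only [u, map_add, map_mul, conj_conj, conj_ofReal]
    ring
  rw [det_fin_four_of_scalar_offDiag_blocks, add_conj, add_conj, ofReal_sub, ← mul_conj, ← hconj]
  simp only [u]
  push_cast
  ring

section

variable (α γ ε lam η k : ℝ)

@[simp] theorem D₁_re : (D₁ α γ ε lam η k).re = ε ^ 2 * lam + 2 * γ * Rε ε η k := by
  simp only [D₁, add_re, mul_re, I_re, I_im, ofReal_re, ofReal_im]; ring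

@[simp] theorem D₁_im : (D₁ α γ ε lam η k).im = Δω α ε η k := by
  simp only [D₁, add_im, mul_im, I_re, I_im, ofReal_re, ofReal_im]; ring

@[simp] theorem D₂_re : (D₂ α γ ε lam η k).re = ε ^ 2 * lam + 2 * γ * Rε ε η k := by
  simp only [D₂, add_re, mul_re, I_re, I_im, ofReal_re, ofReal_im, re_ofNat, im_ofNat]; ring

@[simp] theorem D₂_im : (D₂ α γ ε lam η k).im = 2 * ωbar α ε η k := by
  simp only [D₂, add_im, mul_im, I_re, I_im, ofReal_re, ofReal_im, re_ofNat, im_ofNat]; ring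

end

theorem det_Dmat_formula_general (α γ : ℝ) (ε lam η k : ℝ) :
    δdet α γ ε lam η k =
      (ε ^ 8 * lam ^ 4 + 8 * ε ^ 6 * lam ^ 3 * γ * Rε ε η k
        + 4 * ε ^ 4 * lam ^ 2 *
            (5 * (γ * Rε ε η k) ^ 2 + ωbar α ε η k ^ 2 + (Δω α ε η k / 2) ^ 2
              - (γ * ε * R' k * η / 2) ^ 2)
        + 4 * ε ^ 2 * lam * (γ * Rε ε η k) *
            (4 * (γ * Rε ε η k) ^ 2 + 4 * ωbar α ε η k ^ 2 + Δω α ε η k ^ 2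
              - (γ * ε * R' k * η) ^ 2)
        + 4 * ((γ * Rε ε η k * Δω α ε η k) ^ 2
              - 2 * ε * γ ^ 2 * Rε ε η k * Δω α ε η k * ωbar α ε η k * R' k * η
              + (ωbar α ε η k * Δω α ε η k) ^ 2)
        + 16 * (γ * Rε ε η k * ωbar α ε η k) ^ 2 : ℝ) := by
  rw [δdet, Dmat, det_fin_four_of_conj_diag]
  congr 1
  simp only [normSq_apply, add_re, add_im, mul_re, mul_im, conj_re, conj_im, ofReal_re, ofReal_im,
    D₁_re, D₁_im, D₂_re, D₂_im, Dplus, Dminus]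
  ring

theorem det_Dmat_formula (α γ : ℝ) (hα : 0 < α) (hγ : 0 < γ) (ε lam η k : ℝ)
    (hε : ε ∈ Set.Ioc (0:ℝ) 1) (hlam : 0 < lam) :
    δdet α γ ε lam η k =
      (ε ^ 8 * lam ^ 4 + 8 * ε ^ 6 * lam ^ 3 * γ * Rε ε η k
        + 4 * ε ^ 4 * lam ^ 2 *
            (5 * (γ * Rε ε η k) ^ 2 + ωbar α ε η k ^ 2 + (Δω α ε η k / 2) ^ 2
              - (γ * ε * R' k * η / 2) ^ 2)
        + 4 * ε ^ 2 * lam * (γ * Rε ε η k) *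
            (4 * (γ * Rε ε η k) ^ 2 + 4 * ωbar α ε η k ^ 2 + Δω α ε η k ^ 2
              - (γ * ε * R' k * η) ^ 2)
        + 4 * ((γ * Rε ε η k * Δω α ε η k) ^ 2
              - 2 * ε * γ ^ 2 * Rε ε η k * Δω α ε η k * ωbar α ε η k * R' k * η
              + (ωbar α ε η k * Δω α ε η k) ^ 2)
        + 16 * (γ * Rε ε η k * ωbar α ε η k) ^ 2 : ℝ) :=
  det_Dmat_formula_general α γ ε lam η k
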